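/- arXiv:2211.06875 — 6 statements merged into one kernel-verified Lean document; each statement's English description precedes it below -/
import Mathlib

section
/- Let n ≥ 1 and p > 0, and let φ_K and φ_L be positive continuous functions on S^n. Then ∫_{S^n} φ_L^p φ_K^{−n−p} dσ − ∫_{S^n} φ_K^{−n} dσ ≥ (∫_{S^n} φ_K^{−n} dσ) · ((∫_{S^n} φ_L^{−n} dσ)^{−p/n} (∫_{S^n} φ_K^{−n} dσ)^{p/n} − 1), with equality if and only if φ_L/φ_K is constant on S^n. -/
open MeasureTheory

/-- The standard (surface) measure `dσ` on the unit sphere `S^n ⊂ ℝ^{n+1}`. -/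
noncomputable def sphereMeasure (n : ℕ) :
    Measure (Metric.sphere (0 : EuclideanSpace ℝ (Fin (n + 1))) 1) :=
  Measure.toSphere (volume : Measure (EuclideanSpace ℝ (Fin (n + 1))))

section Aux

open Set Metric Filter
open scoped Pointwise ENNReal NNReal

lemma aux_integrable {X : Type*} [MeasurableSpace X] [TopologicalSpace X]
    [OpensMeasurableSpace X] [T2Space X] [CompactSpace X] (μ : Measure X) [IsFiniteMeasure μ]
    {f : X → ℝ} (hf : Continuous f) : Integrable f μ :=
  hf.integrable_of_hasCompactSupport
    (IsCompact.of_isClosed_subset isCompact_univ (isClosed_tsupport f) (subset_univ _))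

lemma strictConvexOn_rpow_neg {q m : ℝ} (hq : q < 0) (hm : 0 < m) :
    StrictConvexOn ℝ (Set.Ici m) (fun t : ℝ => t ^ q) := by
  apply strictConvexOn_of_deriv2_pos (convex_Ici m)
  · intro x hx
    exact (Real.continuousAt_rpow_const x q (Or.inl (hm.trans_le hx).ne')).continuousWithinAt
  · intro x hx
    rw [interior_Ici] at hx
    have hx0 : 0 < x := hm.trans hx
    have hev : deriv (fun t : ℝ => t ^ q) =ᶠ[nhds x] fun t => q * t ^ (q - 1) := by
      filter_upwards [IsOpen.mem_nhds isOpen_Ioi hx0] with t ht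
      exact (Real.hasDerivAt_rpow_const (Or.inl (ne_of_gt ht))).deriv
    have h2 : deriv^[2] (fun t : ℝ => t ^ q) x = deriv (deriv fun t : ℝ => t ^ q) x := rfl
    rw [h2, hev.deriv_eq, ((Real.hasDerivAt_rpow_const (p := q - 1)
      (Or.inl hx0.ne')).const_mul q).deriv]
    have hxp : 0 < x ^ (q - 1 - 1) := Real.rpow_pos_of_pos hx0 _
    have := mul_pos (neg_pos.2 hq) (mul_pos (by linarith : (0:ℝ) < 1 - q) hxp)
    nlinarith

instance sphereMeasure_finite (n : ℕ) : IsFiniteMeasure (sphereMeasure n) := by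
  unfold sphereMeasure; infer_instance

instance sphereMeasure_openPos (n : ℕ) : (sphereMeasure n).IsOpenPosMeasure := by
  constructor
  intro U hU hne
  set E := EuclideanSpace ℝ (Fin (n + 1))
  rw [sphereMeasure, Measure.toSphere_apply' _ hU.measurableSet]
  apply mul_ne_zero
  · simp [finrank_euclideanSpace_fin]
  · rw [← Measure.toSphere_apply_aux volume U ⟨1, mem_Ioi.2 one_pos⟩]
    have hopen : IsOpen ((↑) '' (homeomorphUnitSphereProd E ⁻¹'
        U ×ˢ Iio (⟨1, mem_Ioi.2 one_pos⟩ : Ioi (0 : ℝ))) : Set E) := by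
      apply (isOpen_compl_singleton (x := (0 : E))).isOpenMap_subtype_val
      apply (Homeomorph.isOpen_preimage _).2
      apply hU.prod
      have : (Iio (⟨1, mem_Ioi.2 one_pos⟩ : Ioi (0 : ℝ)))
          = Subtype.val ⁻¹' (Iio (1 : ℝ)) := by
        ext x; simp [← Subtype.coe_lt_coe]
      rw [this]
      exact isOpen_Iio.preimage continuous_subtype_val
    have hne' : ((↑) '' (homeomorphUnitSphereProd E ⁻¹'
        U ×ˢ Iio (⟨1, mem_Ioi.2 one_pos⟩ : Ioi (0 : ℝ))) : Set E).Nonempty := by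
      obtain ⟨x, hx⟩ := hne
      refine ⟨_, ⟨(homeomorphUnitSphereProd E).symm (x, ⟨(1:ℝ)/2, by norm_num⟩), ?_, rfl⟩⟩
      simp only [Set.mem_preimage, Homeomorph.apply_symm_apply, Set.mem_prod]
      exact ⟨hx, by simp [← Subtype.coe_lt_coe]; norm_num⟩
    exact (hopen.measure_pos volume hne').ne'

end Aux

/-- (`k = n`, `p > 0` case of the horospherical `p`-Minkowski
inequality.) For `n ≥ 1`, `p > 0` and positive continuous functions `φ_K, φ_L` on `S^n`:
`∫ φ_L^p φ_K^{−n−p} dσ − ∫ φ_K^{−n} dσ ≥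
  (∫ φ_K^{−n} dσ) ((∫ φ_L^{−n} dσ)^{−p/n} (∫ φ_K^{−n} dσ)^{p/n} − 1)`,
with equality iff `φ_L/φ_K` is constant on `S^n`. -/
theorem horospherical_p_minkowski_top_order (n : ℕ) (hn : 1 ≤ n) (p : ℝ) (hp : 0 < p)
    (φK φL : Metric.sphere (0 : EuclideanSpace ℝ (Fin (n + 1))) 1 → ℝ)
    (hK : Continuous φK) (hL : Continuous φL)
    (hKpos : ∀ z, 0 < φK z) (hLpos : ∀ z, 0 < φL z) :
    (∫ z, φL z ^ p * φK z ^ (-(n : ℝ) - p) ∂(sphereMeasure n)) -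
          ∫ z, φK z ^ (-(n : ℝ)) ∂(sphereMeasure n) ≥
        (∫ z, φK z ^ (-(n : ℝ)) ∂(sphereMeasure n)) *
          ((∫ z, φL z ^ (-(n : ℝ)) ∂(sphereMeasure n)) ^ (-(p / (n : ℝ))) *
            (∫ z, φK z ^ (-(n : ℝ)) ∂(sphereMeasure n)) ^ (p / (n : ℝ)) - 1) ∧
      ((∫ z, φL z ^ p * φK z ^ (-(n : ℝ) - p) ∂(sphereMeasure n)) -
            ∫ z, φK z ^ (-(n : ℝ)) ∂(sphereMeasure n) =
          (∫ z, φK z ^ (-(n : ℝ)) ∂(sphereMeasure n)) *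
            ((∫ z, φL z ^ (-(n : ℝ)) ∂(sphereMeasure n)) ^ (-(p / (n : ℝ))) *
              (∫ z, φK z ^ (-(n : ℝ)) ∂(sphereMeasure n)) ^ (p / (n : ℝ)) - 1) ↔
        ∃ c : ℝ, ∀ z, φL z = c * φK z) := by
  classical
  haveI hnonempty : Nonempty (Metric.sphere (0 : EuclideanSpace ℝ (Fin (n + 1))) 1) :=
    ((NormedSpace.sphere_nonempty (E := EuclideanSpace ℝ (Fin (n + 1)))).mpr zero_le_one).to_subtype
  set μ := sphereMeasure n with hμdef
  have hn0 : (0:ℝ) < n := by exact_mod_cast hn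
  set q : ℝ := p / n with hqdef
  have hq0 : 0 < q := div_pos hp hn0
  set A := ∫ z, φK z ^ (-(n : ℝ)) ∂μ with hAdef
  set B := ∫ z, φL z ^ (-(n : ℝ)) ∂μ with hBdef
  set C := ∫ z, φL z ^ p * φK z ^ (-(n : ℝ) - p) ∂μ with hCdef
  -- positive integrals
  have posint : ∀ (g : Metric.sphere (0 : EuclideanSpace ℝ (Fin (n + 1))) 1 → ℝ),
      Continuous g → (∀ z, 0 < g z) → 0 < ∫ z, g z ∂μ := by
    intro g hg hgpos
    rw [integral_pos_iff_support_of_nonneg (fun z => (hgpos z).le) (aux_integrable μ hg)]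
    have hs : Function.support g = Set.univ := by
      ext z; simp [Function.mem_support, (hgpos z).ne']
    rw [hs]
    exact isOpen_univ.measure_pos μ Set.univ_nonempty
  have hA0 : 0 < A := posint _ (hK.rpow_const fun z => Or.inl (hKpos z).ne')
    (fun z => Real.rpow_pos_of_pos (hKpos z) _)
  have hB0 : 0 < B := posint _ (hL.rpow_const fun z => Or.inl (hLpos z).ne')
    (fun z => Real.rpow_pos_of_pos (hLpos z) _)
  -- the ratio function
  set f : Metric.sphere (0 : EuclideanSpace ℝ (Fin (n + 1))) 1 → ℝ :=
    fun z => φL z / φK z with hfdef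
  have hfpos : ∀ z, 0 < f z := fun z => div_pos (hLpos z) (hKpos z)
  have hfcont : Continuous f := hL.div hK fun z => (hKpos z).ne'
  set h : Metric.sphere (0 : EuclideanSpace ℝ (Fin (n + 1))) 1 → ℝ :=
    fun z => f z ^ (-(n:ℝ)) with hhdef
  have hhpos : ∀ z, 0 < h z := fun z => Real.rpow_pos_of_pos (hfpos z) _
  have hhcont : Continuous h := hfcont.rpow_const fun z => Or.inl (hfpos z).ne'
  -- weight and weighted measure
  set wR : Metric.sphere (0 : EuclideanSpace ℝ (Fin (n + 1))) 1 → ℝ :=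
    fun z => φK z ^ (-(n:ℝ)) with hwRdef
  have hwRpos : ∀ z, 0 < wR z := fun z => Real.rpow_pos_of_pos (hKpos z) _
  have hwRcont : Continuous wR := hK.rpow_const fun z => Or.inl (hKpos z).ne'
  set ν := μ.withDensity (fun z => ENNReal.ofReal (wR z)) with hνdef
  haveI : IsFiniteMeasure ν :=
    isFiniteMeasure_withDensity_ofReal (aux_integrable μ hwRcont).hasFiniteIntegral
  have key : ∀ (g : Metric.sphere (0 : EuclideanSpace ℝ (Fin (n + 1))) 1 → ℝ),
      ∫ z, g z ∂ν = ∫ z, wR z * g z ∂μ := by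
    intro g
    have : ∫ z, g z ∂ν = ∫ z, (fun z => (wR z).toNNReal) z • g z ∂μ :=
      integral_withDensity_eq_integral_smul
        (hwRcont.measurable.real_toNNReal) g
    rw [this]
    congr 1; funext z
    rw [NNReal.smul_def, smul_eq_mul, Real.coe_toNNReal _ (hwRpos z).le]
  -- pointwise identities
  have idB : ∀ z, wR z * h z = φL z ^ (-(n:ℝ)) := by
    intro z
    simp only [hhdef, hfdef, hwRdef]
    rw [Real.div_rpow (hLpos z).le (hKpos z).le]
    field_simp [(Real.rpow_pos_of_pos (hKpos z) (-(n:ℝ))).ne']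
    exact mul_div_cancel_left₀ _ (Real.rpow_pos_of_pos (hKpos z) (-(n:ℝ))).ne'
  have idC : ∀ z, wR z * h z ^ (-q) = φL z ^ p * φK z ^ (-(n:ℝ) - p) := by
    intro z
    have e1 : h z ^ (-q) = f z ^ p := by
      simp only [hhdef]
      rw [← Real.rpow_mul (hfpos z).le]
      congr 1
      rw [hqdef]
      field_simp
    have e2 : f z ^ p = φL z ^ p / φK z ^ p := Real.div_rpow (hLpos z).le (hKpos z).le _
    rw [e1, e2]
    simp only [hwRdef]
    rw [Real.rpow_sub (hKpos z)]
    ring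
  have hintB : ∫ z, h z ∂ν = B := by
    rw [key h, hBdef]
    exact integral_congr_ae (Filter.Eventually.of_forall idB)
  have hintC : ∫ z, h z ^ (-q) ∂ν = C := by
    rw [key _, hCdef]
    exact integral_congr_ae (Filter.Eventually.of_forall idC)
  have hνuniv : (ν Set.univ).toReal = A := by
    rw [hνdef, withDensity_apply _ MeasurableSet.univ, Measure.restrict_univ,
      ← ofReal_integral_eq_lintegral_ofReal (aux_integrable μ hwRcont)
        (Filter.Eventually.of_forall fun z => (hwRpos z).le)]
    rw [ENNReal.toReal_ofReal (integral_nonneg fun z => (hwRpos z).le), hAdef]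
  -- minimum of h
  obtain ⟨z₁, -, hz₁⟩ := isCompact_univ.exists_isMinOn Set.univ_nonempty hhcont.continuousOn
  set m := h z₁ with hmdef
  have hm0 : 0 < m := hhpos z₁
  -- Jensen dichotomy
  have hconv : StrictConvexOn ℝ (Set.Ici m) (fun t : ℝ => t ^ (-q)) :=
    strictConvexOn_rpow_neg (by linarith : -q < 0) hm0
  have hgc : ContinuousOn (fun t : ℝ => t ^ (-q)) (Set.Ici m) := by
    intro x hx
    exact (Real.continuousAt_rpow_const x (-q) (Or.inl (hm0.trans_le hx).ne')).continuousWithinAt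
  have hmem : ∀ᵐ z ∂ν, h z ∈ Set.Ici m := ae_of_all _ fun z => hz₁ (Set.mem_univ z)
  have hin1 : Integrable h ν := aux_integrable ν hhcont
  have hin2 : Integrable ((fun t : ℝ => t ^ (-q)) ∘ h) ν :=
    aux_integrable ν (hhcont.rpow_const fun z => Or.inl (hhpos z).ne')
  have havg1 : ⨍ z, h z ∂ν = A⁻¹ * B := by
    rw [average_eq, measureReal_def, hνuniv, hintB, smul_eq_mul]
  have havg2 : ⨍ z, h z ^ (-q) ∂ν = A⁻¹ * C := by
    rw [average_eq, measureReal_def, hνuniv, hintC, smul_eq_mul]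
  have hXeq : (A⁻¹ * B) ^ (-q) = B ^ (-q) * A ^ q := by
    rw [Real.mul_rpow (inv_nonneg.2 hA0.le) hB0.le, Real.inv_rpow hA0.le,
      Real.rpow_neg hA0.le q, inv_inv, mul_comm]
  -- computation for the proportional case
  have compute : ∀ c : ℝ, 0 < c → (∀ z, φL z = c * φK z) →
      C = A * (B ^ (-q) * A ^ q) := by
    intro c hc hcl
    have hBc : B = c ^ (-(n:ℝ)) * A := by
      rw [hBdef, hAdef]
      simp only [hwRdef]
      rw [← integral_const_mul]
      refine integral_congr_ae (Filter.Eventually.of_forall fun z => ?_)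
      show φL z ^ (-(n:ℝ)) = c ^ (-(n:ℝ)) * φK z ^ (-(n:ℝ))
      rw [hcl z, Real.mul_rpow hc.le (hKpos z).le]
    have hCc : C = c ^ p * A := by
      rw [hCdef, hAdef]
      simp only [hwRdef]
      rw [← integral_const_mul]
      refine integral_congr_ae (Filter.Eventually.of_forall fun z => ?_)
      have hKK : φK z ^ p * φK z ^ (-(n:ℝ) - p) = φK z ^ (-(n:ℝ)) := by
        rw [← Real.rpow_add (hKpos z)]
        congr 1
        ring
      show φL z ^ p * φK z ^ (-(n:ℝ) - p) = c ^ p * φK z ^ (-(n:ℝ))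
      rw [hcl z, Real.mul_rpow hc.le (hKpos z).le, mul_assoc, hKK]
    have hcn : (c ^ (-(n:ℝ))) ^ (-q) = c ^ p := by
      rw [← Real.rpow_mul hc.le]
      congr 1
      rw [hqdef]; field_simp
    have hAq : (A ^ q)⁻¹ * A ^ q = 1 := inv_mul_cancel₀ (Real.rpow_pos_of_pos hA0 q).ne'
    rw [hCc, hBc, Real.mul_rpow (Real.rpow_pos_of_pos hc _).le hA0.le, hcn,
      Real.rpow_neg hA0.le q]
    calc c ^ p * A = A * (c ^ p * ((A ^ q)⁻¹ * A ^ q)) := by rw [hAq]; ring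
      _ = A * (c ^ p * (A ^ q)⁻¹ * A ^ q) := by ring
  rcases hconv.ae_eq_const_or_map_average_lt hgc isClosed_Ici hmem hin1 hin2 with hconst | hlt
  · -- a.e. constant case: φL is proportional to φK, equality holds
    have hμae : ∀ᵐ z ∂μ, h z = ⨍ z, h z ∂ν := by
      have hdens : Measurable fun z => ENNReal.ofReal (wR z) :=
        hwRcont.measurable.ennreal_ofReal
      have h3 := (ae_withDensity_iff hdens).1 hconst
      filter_upwards [h3] with z hz
      refine hz ?_
      simp only [ne_eq, ENNReal.ofReal_eq_zero, not_le]
      exact hwRpos z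
    have heq : h = fun _ => ⨍ z, h z ∂ν :=
      (Continuous.ae_eq_iff_eq μ hhcont continuous_const).1 hμae
    set cst := ⨍ z, h z ∂ν with hcstdef
    have hnne : (-(n:ℝ)) ≠ 0 := by
      simp only [ne_eq, neg_eq_zero]
      exact hn0.ne'
    have hcst : h z₁ = cst := congrFun heq z₁
    have hcst0 : 0 < cst := hcst ▸ hhpos z₁
    set c := cst ^ (-(n:ℝ))⁻¹ with hcdef
    have hc0 : 0 < c := Real.rpow_pos_of_pos hcst0 _
    have hfz : ∀ z, f z = c := by
      intro z
      have h1 : h z = cst := congrFun heq z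
      have h2 : (h z) ^ (-(n:ℝ))⁻¹ = f z := by
        simp only [hhdef]
        exact Real.rpow_rpow_inv (hfpos z).le hnne
      rw [← h2, h1]
    have hcl : ∀ z, φL z = c * φK z := by
      intro z
      have hz := hfz z
      simp only [hfdef] at hz
      rw [div_eq_iff (hKpos z).ne'] at hz
      exact hz
    have hCeq := compute c hc0 hcl
    constructor
    · rw [ge_iff_le, mul_sub, mul_one]
      linarith [hCeq]
    · constructor
      · intro _; exact ⟨c, hcl⟩
      · intro _
        rw [mul_sub, mul_one]
        linarith [hCeq]
  · -- strict inequality case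
    rw [havg1, havg2, hXeq] at hlt
    have hlt' : A * (B ^ (-q) * A ^ q) < C := by
      have h2 := mul_lt_mul_of_pos_left hlt hA0
      rw [show A * (A⁻¹ * C) = C by field_simp] at h2
      exact h2
    constructor
    · rw [ge_iff_le, mul_sub, mul_one]
      linarith [hlt']
    · constructor
      · intro heq
        rw [mul_sub, mul_one] at heq
        linarith [hlt']
      · rintro ⟨c, hc⟩
        have hc0 : 0 < c := by
          obtain ⟨z₀⟩ : Nonempty (Metric.sphere (0 : EuclideanSpace ℝ (Fin (n + 1))) 1) :=
            inferInstance
          have h1 := hLpos z₀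
          rw [hc z₀] at h1
          nlinarith [hKpos z₀]
        have := compute c hc0 hc
        linarith [hlt']
end

section
/- For 0 ≤ k < l ≤ n and λ in the positive cone Γ^+, the inequality p_k(λ) p_{l−1}(λ) ≥ p_k(λ)^{1 + 1/(l−k)} p_l(λ)^{1 − 1/(l−k)} holds, i.e., p_l(λ)/p_k(λ) ≥ (p_l(λ)/p_{l−1}(λ))^{l−k}. -/
/-- The normalized `m`-th elementary symmetric function
`p_m(λ) = σ_m(λ) / C(n,m)` of `λ = (λ_1, …, λ_n)`. -/
noncomputable def psymNorm (n m : ℕ) (lam : Fin n → ℝ) : ℝ :=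
  (∑ s ∈ Finset.powersetCard m (Finset.univ : Finset (Fin n)), ∏ i ∈ s, lam i) /
    (n.choose m : ℝ)

namespace NewtonChainAux
open Polynomial

lemma descF_pos {n k : ℕ} (h : k ≤ n) : 0 < n.descFactorial k :=
  Nat.pos_of_ne_zero (fun h0 => absurd (Nat.descFactorial_eq_zero_iff_lt.mp h0) (by omega))

lemma derivStep (p : ℝ[X]) (h : p.roots.card = p.natDegree) :
    (derivative p).roots.card = p.natDegree - 1 ∧
      (derivative p).natDegree = p.natDegree - 1 := by
  rcases Nat.eq_zero_or_pos p.natDegree with h0 | h0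
  · have : p = C (p.coeff 0) := p.eq_C_of_natDegree_eq_zero h0
    rw [h0, this, derivative_C]
    simp
  · have h1 := p.card_roots_le_derivative
    have h2 := (derivative p).card_roots'
    have h3 : (derivative p).natDegree < p.natDegree :=
      natDegree_derivative_lt (Nat.pos_iff_ne_zero.mp h0)
    omega

lemma derivIter (p : ℝ[X]) (h : p.roots.card = p.natDegree) (t : ℕ) :
    (derivative^[t] p).roots.card = p.natDegree - t ∧
      (derivative^[t] p).natDegree = p.natDegree - t := by
  induction t with
  | zero => exact ⟨by simpa using h, by simp⟩
  | succ t ih =>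
    rw [Function.iterate_succ_apply']
    have := derivStep _ (ih.1.trans ih.2.symm)
    rw [ih.2] at this
    omega


lemma reverse_multiset_prod (s : Multiset ℝ[X]) :
    s.prod.reverse = (s.map Polynomial.reverse).prod := by
  induction s using Multiset.induction with
  | empty => simp [Polynomial.reverse]
  | cons a s ih =>
    simp only [Multiset.prod_cons, Multiset.map_cons]
    rw [Polynomial.reverse_mul_of_domain, ih]

lemma reverse_X_sub_C (r : ℝ) (hr : r ≠ 0) :
    (X - C r).reverse = C (-r) * (X - C r⁻¹) := by
  have h1 : (X - C r).natDegree = 1 := natDegree_X_sub_C r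
  have : (X - C r).reverse = reflect 1 (X - C r) := by rw [Polynomial.reverse, h1]
  rw [this, reflect_sub, reflect_C]
  have : reflect 1 (X : ℝ[X]) = 1 := by
    simpa using reflect_monomial 1 1 (R := ℝ)
  rw [this]
  rw [mul_sub, ← C_mul, neg_mul, mul_inv_cancel₀ hr, pow_one]
  simp only [map_neg, map_one]
  ring

lemma reverseStep (p : ℝ[X]) (h : p.roots.card = p.natDegree) (h0 : p.coeff 0 ≠ 0) :
    p.reverse.roots.card = p.natDegree ∧ p.reverse.natDegree = p.natDegree := by
  have hp : p ≠ 0 := fun hp => h0 (by simp [hp])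
  have htd : p.natTrailingDegree = 0 :=
    Nat.le_zero.mp (natTrailingDegree_le_of_ne_zero h0)
  have hdeg : p.reverse.natDegree = p.natDegree := by
    rw [reverse_natDegree, htd, Nat.sub_zero]
  refine ⟨?_, hdeg⟩
  have hroot0 : (0:ℝ) ∉ p.roots := by
    intro h0'
    have := (mem_roots hp).mp h0'
    exact h0 (by simpa [IsRoot, coeff_zero_eq_eval_zero] using ((mem_roots'.mp h0').2 : p.IsRoot 0))
  have hfac := C_leadingCoeff_mul_prod_multiset_X_sub_C (p := p) h
  have hrev : p.reverse = C (p.leadingCoeff * (p.roots.map fun r => -r).prod) *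
      ((p.roots.map Inv.inv).map fun a => X - C a).prod := by
    conv_lhs => rw [← hfac]
    rw [Polynomial.reverse_mul_of_domain, reverse_C, reverse_multiset_prod,
      Multiset.map_map]
    have : ∀ r ∈ p.roots, ((X - C r).reverse : ℝ[X]) = C (-r) * (X - C r⁻¹) := by
      intro r hr
      exact reverse_X_sub_C r (fun h' => hroot0 (h' ▸ hr))
    rw [Function.comp_def, Multiset.map_congr rfl this]
    have : (p.roots.map fun r => C (-r) * (X - C r⁻¹)).prod =
        (p.roots.map fun r => C (-r)).prod * (p.roots.map fun r => X - C r⁻¹).prod := by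
      rw [← Multiset.prod_map_mul]
    rw [this]
    have hC : (p.roots.map fun r => (C (-r) : ℝ[X])).prod = C ((p.roots.map fun r => -r).prod) := by
      rw [← Multiset.prod_hom _ (C : ℝ →+* ℝ[X]), Multiset.map_map]
      rfl
    rw [hC, C_mul, Multiset.map_map, ← mul_assoc]
    rfl
  have hc : p.leadingCoeff * (p.roots.map fun r => -r).prod ≠ 0 := by
    refine mul_ne_zero (leadingCoeff_ne_zero.mpr hp) (Multiset.prod_ne_zero ?_)
    simp only [Multiset.mem_map]
    rintro ⟨r, hr, hr0⟩
    exact hroot0 (by rwa [show r = 0 by linarith [neg_eq_zero.mp hr0]] at hr)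
  rw [hrev, roots_C_mul _ hc, roots_multiset_prod_X_sub_C]
  simpa using h


lemma quad_discrim (q : ℝ[X]) (hdeg : q.natDegree ≤ 2) (hc2 : q.coeff 2 ≠ 0)
    (hcard : 0 < q.roots.card) :
    4 * q.coeff 2 * q.coeff 0 ≤ q.coeff 1 ^ 2 := by
  have hne : q.roots ≠ 0 := by
    intro h; rw [h] at hcard; simp at hcard
  obtain ⟨x, hx⟩ := Multiset.exists_mem_of_ne_zero hne
  have hq : q ≠ 0 := fun h => by simp [h] at hx
  have hroot : q.eval x = 0 := (mem_roots'.mp hx).2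
  have heval : q.eval x = ∑ i ∈ Finset.range 3, q.coeff i * x ^ i :=
    eval_eq_sum_range' (Nat.lt_succ_of_le hdeg) x
  have h0 : q.coeff 2 * (x * x) + q.coeff 1 * x + q.coeff 0 = 0 := by
    rw [heval] at hroot
    simp [Finset.sum_range_succ] at hroot
    linarith
  have := (quadratic_eq_zero_iff_discrim_eq_sq hc2 x).mp h0
  rw [discrim] at this
  nlinarith [sq_nonneg (2 * q.coeff 2 * x + q.coeff 1)]


lemma esymm_pos (n j : ℕ) (hj : j ≤ n) (lam : Fin n → ℝ) (hlam : ∀ i, 0 < lam i) :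
    0 < ∑ s ∈ Finset.powersetCard j (Finset.univ : Finset (Fin n)), ∏ i ∈ s, lam i := by
  apply Finset.sum_pos
  · intro s _; exact Finset.prod_pos (fun i _ => hlam i)
  · exact Finset.powersetCard_nonempty.mpr (by simpa using hj)

lemma psymNorm_pos (n j : ℕ) (hj : j ≤ n) (lam : Fin n → ℝ) (hlam : ∀ i, 0 < lam i) :
    0 < psymNorm n j lam :=
  div_pos (esymm_pos n j hj lam hlam) (by exact_mod_cast Nat.choose_pos hj)

lemma descF_succ_self (k : ℕ) : (k+1).descFactorial k = Nat.factorial (k+1) := by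
  conv_rhs => rw [← Nat.descFactorial_self (k+1)]
  rw [Nat.descFactorial_succ, show k+1-k = 1 by omega, one_mul]

lemma descF_two (k : ℕ) : 2 * ((k+2).descFactorial k) = Nat.factorial (k+2) := by
  conv_rhs => rw [← Nat.descFactorial_self (k+2)]
  rw [Nat.descFactorial_succ, Nat.descFactorial_succ,
    show k+2-(k+1) = 1 by omega, show k+2-k = 2 by omega, one_mul]

lemma newton_ineq (n m : ℕ) (hm : 1 ≤ m) (hmn : m + 1 ≤ n) (lam : Fin n → ℝ)
    (hlam : ∀ i, 0 < lam i) :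
    psymNorm n (m-1) lam * psymNorm n (m+1) lam ≤ psymNorm n m lam ^ 2 := by
  obtain ⟨a, rfl⟩ : ∃ a, m = a + 1 := ⟨m - 1, by omega⟩
  obtain ⟨b, rfl⟩ : ∃ b, n = a + b + 2 := ⟨n - a - 2, by omega⟩
  set E : ℕ → ℝ := fun j =>
    ∑ s ∈ Finset.powersetCard j (Finset.univ : Finset (Fin (a+b+2))), ∏ i ∈ s, lam i with hE
  have hEpos : ∀ j, j ≤ a+b+2 → 0 < E j := by
    intro j hj; rw [hE]; exact esymm_pos _ j hj lam hlam
  obtain ⟨f, hf⟩ : ∃ x : ℝ[X] , x = ∏ i : Fin (a+b+2), (X + C (lam i)) := ⟨_, rfl⟩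
  have hfdeg : f.natDegree = a+b+2 := by
    rw [hf, natDegree_prod _ _ (fun i _ => X_add_C_ne_zero (lam i))]
    simp
  have hfroots : f.roots.card = a+b+2 := by
    have hfeq : f = ((Finset.univ.val.map (fun i : Fin (a+b+2) => -lam i)).map
        (fun r => X - C r)).prod := by
      rw [hf, Multiset.map_map, Finset.prod_eq_multiset_prod]
      apply congrArg
      apply Multiset.map_congr rfl
      intro i _
      simp [sub_neg_eq_add]
    rw [hfeq, roots_multiset_prod_X_sub_C]
    simp
  have hfcoeff : ∀ j, j ≤ a+b+2 → f.coeff j = E (a+b+2-j) := by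
    intro j hj
    rw [hf, Finset.prod_X_add_C_coeff _ _ (by simpa using hj)]
    simp [hE]
  -- first differentiation block
  obtain ⟨g, hg⟩ : ∃ x : ℝ[X] , x = derivative^[b] f := ⟨_, rfl⟩
  have hgfacts := derivIter f (hfroots.trans hfdeg.symm) b
  rw [hfdeg] at hgfacts
  have hgdeg : g.natDegree = a+2 := by rw [hg, hgfacts.2]; omega
  have hgroots : g.roots.card = a+2 := by rw [hg, hgfacts.1]; omega
  have hgcoeff : ∀ kk, kk ≤ a+2 → g.coeff kk = ((kk + b).descFactorial b : ℝ) * E (a+2-kk) := by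
    intro kk hkk
    rw [hg, coeff_iterate_derivative, nsmul_eq_mul, hfcoeff (kk+b) (by omega)]
    congr 2
    omega
  have hg0 : 0 < g.coeff 0 := by
    rw [hgcoeff 0 (by omega)]
    have h1 := hEpos (a+2) (by omega)
    have h2 : 0 < (0 + b).descFactorial b := descF_pos (by omega)
    have h2' : (0:ℝ) < ((0 + b).descFactorial b : ℝ) := by exact_mod_cast h2
    exact mul_pos h2' (by simpa using h1)
  -- reversal
  obtain ⟨h, hh⟩ : ∃ x : ℝ[X] , x = g.reverse := ⟨_, rfl⟩
  have hhfacts := reverseStep g (hgroots.trans hgdeg.symm) (ne_of_gt hg0)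
  rw [← hh, hgdeg] at hhfacts
  have hhdeg : h.natDegree = a+2 := hhfacts.2
  have hhroots : h.roots.card = a+2 := hhfacts.1
  have hhcoeff : ∀ j, j ≤ a+2 → h.coeff j = g.coeff (a+2-j) := by
    intro j hj
    rw [hh, coeff_reverse, hgdeg, revAt_le hj]
  -- second differentiation block
  obtain ⟨q, hq⟩ : ∃ x : ℝ[X] , x = derivative^[a] h := ⟨_, rfl⟩
  have hqfacts := derivIter h (hhroots.trans hhdeg.symm) a
  rw [hhdeg] at hqfacts
  have hqdeg : q.natDegree = 2 := by rw [hq, hqfacts.2]; omega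
  have hqroots : q.roots.card = 2 := by rw [hq, hqfacts.1]; omega
  have hqcoeff : ∀ j, j ≤ 2 → q.coeff j = ((j + a).descFactorial a : ℝ) * h.coeff (j+a) := by
    intro j hj
    rw [hq, coeff_iterate_derivative, nsmul_eq_mul]
  obtain ⟨A2, hA2⟩ : ∃ x : ℝ , x = (((2+a).descFactorial a : ℕ) : ℝ) * ((b.descFactorial b : ℕ) : ℝ) := ⟨_, rfl⟩
  obtain ⟨A1, hA1⟩ : ∃ x : ℝ , x = (((1+a).descFactorial a : ℕ) : ℝ) * (((1+b).descFactorial b : ℕ) : ℝ) := ⟨_, rfl⟩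
  obtain ⟨A0, hA0⟩ : ∃ x : ℝ , x = ((a.descFactorial a : ℕ) : ℝ) * (((2+b).descFactorial b : ℕ) : ℝ) := ⟨_, rfl⟩
  have hc2 : q.coeff 2 = A2 * E (a+2) := by
    rw [hqcoeff 2 le_rfl, hhcoeff (2+a) (by omega), show a+2-(2+a) = 0 by omega,
      hgcoeff 0 (by omega), show a+2-0 = a+2 by omega, hA2]
    ring
  have hc1 : q.coeff 1 = A1 * E (a+1) := by
    rw [hqcoeff 1 (by omega), hhcoeff (1+a) (by omega), show a+2-(1+a) = 1 by omega,
      hgcoeff 1 (by omega), show a+2-1 = a+1 by omega, hA1]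
    ring
  have hc0 : q.coeff 0 = A0 * E a := by
    rw [hqcoeff 0 (by omega), hhcoeff (0+a) (by omega), show a+2-(0+a) = 2 by omega,
      hgcoeff 2 (by omega), show a+2-2 = a by omega, hA0]
    ring
  have hA2pos : 0 < A2 := by
    rw [hA2]
    have h1 : (0:ℝ) < ((2+a).descFactorial a : ℝ) := by
      exact_mod_cast descF_pos (show a ≤ 2+a by omega)
    have h2 : (0:ℝ) < (b.descFactorial b : ℝ) := by
      exact_mod_cast descF_pos (show b ≤ b by omega)
    exact mul_pos h1 h2
  have hA1pos : 0 < A1 := by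
    rw [hA1]
    have h1 : (0:ℝ) < ((1+a).descFactorial a : ℝ) := by
      exact_mod_cast descF_pos (show a ≤ 1+a by omega)
    have h2 : (0:ℝ) < ((1+b).descFactorial b : ℝ) := by
      exact_mod_cast descF_pos (show b ≤ 1+b by omega)
    exact mul_pos h1 h2
  have hquad := quad_discrim q (le_of_eq hqdeg)
    (by rw [hc2]; exact ne_of_gt (mul_pos hA2pos (hEpos (a+2) (by omega))))
    (by rw [hqroots]; norm_num)
  rw [hc2, hc1, hc0] at hquad
  have e1 : ((1+a).descFactorial a) * ((1+b).descFactorial b) * ((a+b+2).choose (a+1))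
      = Nat.factorial (a+b+2) := by
    rw [show 1+a = a+1 by omega, show 1+b = b+1 by omega, descF_succ_self, descF_succ_self]
    have hch := Nat.choose_mul_factorial_mul_factorial (show a+1 ≤ a+b+2 by omega)
    rw [show a+b+2-(a+1) = b+1 by omega] at hch
    rw [← hch]; ring
  have e2 : ((2+a).descFactorial a) * (b.descFactorial b) * ((a+b+2).choose (a+2)) * 2
      = Nat.factorial (a+b+2) := by
    have hd := descF_two a
    have hb := Nat.descFactorial_self b
    have hch := Nat.choose_mul_factorial_mul_factorial (show a+2 ≤ a+b+2 by omega)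
    rw [show a+b+2-(a+2) = b by omega] at hch
    rw [show 2+a = a+2 by omega, ← hch, ← hd, ← hb]; ring
  have e0 : (a.descFactorial a) * ((2+b).descFactorial b) * ((a+b+2).choose a) * 2
      = Nat.factorial (a+b+2) := by
    have hd := descF_two b
    have ha := Nat.descFactorial_self a
    have hch := Nat.choose_mul_factorial_mul_factorial (show a ≤ a+b+2 by omega)
    rw [show a+b+2-a = b+2 by omega] at hch
    rw [show 2+b = b+2 by omega, ← hch, ← hd, ← ha]; ring
  obtain ⟨C0, hC0⟩ : ∃ x : ℝ , x = (((a+b+2).choose a : ℕ) : ℝ) := ⟨_, rfl⟩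
  obtain ⟨C1, hC1⟩ : ∃ x : ℝ , x = (((a+b+2).choose (a+1) : ℕ) : ℝ) := ⟨_, rfl⟩
  obtain ⟨C2, hC2⟩ : ∃ x : ℝ , x = (((a+b+2).choose (a+2) : ℕ) : ℝ) := ⟨_, rfl⟩
  obtain ⟨F, hF⟩ : ∃ x : ℝ , x = ((Nat.factorial (a+b+2) : ℕ) : ℝ) := ⟨_, rfl⟩
  have E1 : A1 * C1 = F := by
    rw [hA1, hC1, hF]; exact_mod_cast e1
  have E2 : A2 * C2 * 2 = F := by
    rw [hA2, hC2, hF]; exact_mod_cast e2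
  have E0 : A0 * C0 * 2 = F := by
    rw [hA0, hC0, hF]; exact_mod_cast e0
  have hC0pos : (0:ℝ) < C0 := by rw [hC0]; exact_mod_cast Nat.choose_pos (by omega)
  have hC1pos : (0:ℝ) < C1 := by rw [hC1]; exact_mod_cast Nat.choose_pos (by omega)
  have hC2pos : (0:ℝ) < C2 := by rw [hC2]; exact_mod_cast Nat.choose_pos (by omega)
  have hkey : E a * E (a+2) * C1^2 * A1^2 ≤ E (a+1)^2 * (C0 * C2) * A1^2 := by
    have hmul := mul_le_mul_of_nonneg_right hquad (le_of_lt (mul_pos hC0pos hC2pos))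
    calc E a * E (a+2) * C1^2 * A1^2
        = (4 * (A2 * E (a+2)) * (A0 * E a)) * (C0 * C2)
          + (E a * E (a+2)) * ((A1*C1)^2 - (A2*C2*2)*(A0*C0*2)) := by ring
      _ = (4 * (A2 * E (a+2)) * (A0 * E a)) * (C0 * C2) := by rw [E1, E2, E0]; ring
      _ ≤ (A1 * E (a+1))^2 * (C0*C2) := hmul
      _ = E (a+1)^2 * (C0 * C2) * A1^2 := by ring
  have final : E a * E (a+2) * C1^2 ≤ E (a+1)^2 * (C0*C2) :=
    le_of_mul_le_mul_right hkey (pow_pos hA1pos 2)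
  have hP0 : psymNorm (a+b+2) a lam = E a / C0 := by rw [hC0, hE]; rfl
  have hP1 : psymNorm (a+b+2) (a+1) lam = E (a+1) / C1 := by rw [hC1, hE]; rfl
  have hP2 : psymNorm (a+b+2) (a+2) lam = E (a+2) / C2 := by rw [hC2, hE]; rfl
  rw [show a+1-1 = a from rfl, show a+1+1 = a+2 from rfl, hP0, hP1, hP2]
  rw [div_mul_div_comm, div_pow, div_le_div_iff₀ (by exact mul_pos hC0pos hC2pos) (by positivity)]
  linear_combination final

lemma chain_ineq (n k l : ℕ) (hkl : k < l) (hln : l ≤ n) (lam : Fin n → ℝ)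
    (hlam : ∀ i, 0 < lam i) :
    (psymNorm n l lam / psymNorm n (l-1) lam) ^ (l - k) ≤
      psymNorm n l lam / psymNorm n k lam := by
  have hP : ∀ j, j ≤ n → 0 < psymNorm n j lam := fun j hj => psymNorm_pos n j hj lam hlam
  have hQpos : 0 < psymNorm n l lam / psymNorm n (l-1) lam :=
    div_pos (hP l hln) (hP (l-1) (by omega))
  have hstep : ∀ j, 1 ≤ j → j+1 ≤ n →
      psymNorm n (j+1) lam / psymNorm n j lam ≤
        psymNorm n j lam / psymNorm n (j-1) lam := by
    intro j h1 h2
    rw [div_le_div_iff₀ (hP j (by omega)) (hP (j-1) (by omega))]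
    have hnew := newton_ineq n j h1 h2 lam hlam
    nlinarith [hnew]
  have hmono : ∀ i, i ≤ l-1-k →
      psymNorm n l lam / psymNorm n (l-1) lam ≤
        psymNorm n (l-i) lam / psymNorm n (l-i-1) lam := by
    intro i
    induction i with
    | zero => intro _; rw [show l-0 = l by omega]
    | succ i ih =>
      intro hi
      have h1 := ih (by omega)
      have h2 := hstep (l-i-1) (by omega) (by omega)
      rw [show l-i-1+1 = l-i by omega] at h2
      rw [show l-(i+1)-1 = l-i-1-1 by omega, show l-(i+1) = l-i-1 by omega]
      exact le_trans h1 h2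
  have hup : ∀ j, k ≤ j → j ≤ l →
      (psymNorm n l lam / psymNorm n (l-1) lam) ^ (j-k) ≤
        psymNorm n j lam / psymNorm n k lam := by
    intro j hkj
    induction j, hkj using Nat.le_induction with
    | base =>
      intro _
      rw [Nat.sub_self, pow_zero, div_self (ne_of_gt (hP k (by omega)))]
    | succ j hkj ih =>
      intro hjl
      have hato : psymNorm n l lam / psymNorm n (l-1) lam ≤
          psymNorm n (j+1) lam / psymNorm n j lam := by
        have := hmono (l-1-j) (by omega)
        rw [show l-(l-1-j)-1 = j by omega, show l-(l-1-j) = j+1 by omega] at this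
        exact this
      have heq : psymNorm n j lam / psymNorm n k lam *
          (psymNorm n (j+1) lam / psymNorm n j lam) =
          psymNorm n (j+1) lam / psymNorm n k lam := by
        field_simp [ne_of_gt (hP j (by omega)), ne_of_gt (hP k (by omega))]
      rw [show j+1-k = (j-k)+1 by omega, pow_succ, ← heq]
      exact mul_le_mul (ih (by omega)) hato (le_of_lt hQpos)
        (le_of_lt (div_pos (hP j (by omega)) (hP k (by omega))))
  exact hup l (le_of_lt hkl) le_rfl


end NewtonChainAux

open NewtonChainAux in
/-- For `0 ≤ k < l ≤ n` and `λ` in the positive cone,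
`p_k p_{l−1} ≥ p_k^{1+1/(l−k)} p_l^{1−1/(l−k)}`, i.e.
`p_l/p_k ≥ (p_l/p_{l−1})^{l−k}`. -/
theorem newton_chain_inequality (n k l : ℕ) (hkl : k < l) (hln : l ≤ n)
    (lam : Fin n → ℝ) (hlam : ∀ i, 0 < lam i) :
    psymNorm n k lam * psymNorm n (l - 1) lam ≥
        psymNorm n k lam ^ ((1 : ℝ) + 1 / ((l : ℝ) - (k : ℝ))) *
          psymNorm n l lam ^ ((1 : ℝ) - 1 / ((l : ℝ) - (k : ℝ))) ∧
      psymNorm n l lam / psymNorm n k lam ≥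
        (psymNorm n l lam / psymNorm n (l - 1) lam) ^ (l - k) := by
  have hchain := chain_ineq n k l hkl hln lam hlam
  refine ⟨?_, hchain⟩
  have hPk := psymNorm_pos n k (by omega) lam hlam
  have hPl1 := psymNorm_pos n (l-1) (by omega) lam hlam
  have hPl := psymNorm_pos n l (by omega) lam hlam
  obtain ⟨e, he⟩ : ∃ e, l - k = e + 1 := ⟨l - k - 1, by omega⟩
  set Pk := psymNorm n k lam
  set Pl1 := psymNorm n (l-1) lam
  set Pl := psymNorm n l lam
  -- cross-multiplied chain inequality
  have h1 : Pl^(e+1) * Pk ≤ Pl * Pl1^(e+1) := by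
    rw [he, div_pow, div_le_div_iff₀ (pow_pos hPl1 (e+1)) hPk] at hchain
    exact hchain
  -- natural-power form of the goal
  have hnat : Pk^(e+2) * Pl^e ≤ (Pk * Pl1)^(e+1) := by
    have hmm : Pk^(e+2) * Pl^e * Pl ≤ (Pk * Pl1)^(e+1) * Pl := by
      calc Pk^(e+2) * Pl^e * Pl = Pk^(e+1) * (Pl^(e+1) * Pk) := by ring
      _ ≤ Pk^(e+1) * (Pl * Pl1^(e+1)) := by
          exact mul_le_mul_of_nonneg_left h1 (le_of_lt (pow_pos hPk (e+1)))
      _ = (Pk * Pl1)^(e+1) * Pl := by ring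
    exact le_of_mul_le_mul_right hmm hPl
  -- convert to rpow form
  have hD : (l:ℝ) - (k:ℝ) = ((e:ℝ) + 1) := by
    have : ((l - k : ℕ) : ℝ) = (l:ℝ) - (k:ℝ) := Nat.cast_sub hkl.le
    rw [← this, he]
    push_cast
    ring
  rw [ge_iff_le, hD]
  have hepos : (0:ℝ) < (e:ℝ) + 1 := by positivity
  have hexp1 : (1:ℝ) + 1/((e:ℝ)+1) = ((e:ℝ)+2) * (1/((e:ℝ)+1)) := by
    field_simp
    ring
  have hexp2 : (1:ℝ) - 1/((e:ℝ)+1) = (e:ℝ) * (1/((e:ℝ)+1)) := by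
    field_simp
    ring
  rw [hexp1, hexp2]
  rw [Real.rpow_mul hPk.le, Real.rpow_mul hPl.le]
  rw [show ((e:ℝ)+2) = ((e+2 : ℕ) : ℝ) by push_cast; ring,
    show (e:ℝ) = ((e : ℕ) : ℝ) from rfl]
  rw [Real.rpow_natCast Pk (e+2), Real.rpow_natCast Pl e]
  rw [← Real.mul_rpow (by positivity) (by positivity)]
  have hfin : (Pk^(e+2) * Pl^e) ^ ((1:ℝ)/((e:ℝ)+1)) ≤
      ((Pk * Pl1)^(e+1)) ^ ((1:ℝ)/((e:ℝ)+1)) :=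
    Real.rpow_le_rpow (by positivity) hnat (by positivity)
  refine le_trans hfin (le_of_eq ?_)
  rw [← Real.rpow_natCast (Pk * Pl1) (e+1), ← Real.rpow_mul (by positivity)]
  rw [show ((e+1:ℕ):ℝ) * ((1:ℝ)/((e:ℝ)+1)) = 1 by
    push_cast
    rw [mul_one_div, div_self (by positivity : (0:ℝ) < (e:ℝ)+1).ne']]
  exact Real.rpow_one _
end

section
/- Let X = (x, x_{n+1}) ∈ H^{n+1} and r ≥ 0. The horospherical support function of the geodesic ball B(X, r) of radius r centered at X is given by φ(z) = e^r (x_{n+1} − ⟨x, z⟩) for all z ∈ S^n; that is, sup over Y in B(X,r) of −⟨Y, (z,1)⟩ equals e^r (x_{n+1} − ⟨x,z⟩). -/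
open RealInnerProductSpace

/-- The horospherical support function of the geodesic ball `B(X,r)` in
the hyperboloid model `H^{n+1} ⊂ ℝ^{n+1,1}`: for `X = (x, xt)` on the hyperboloid, `r ≥ 0`,
and `z ∈ S^n`, the supremum of `−⟨Y, (z,1)⟩` over
`Y = cosh t • X + sinh t • v ∈ B(X,r)` (with `0 ≤ t ≤ r` and `v` a unit tangent vector at
`X`) equals `e^r (xt − ⟨x,z⟩)`. -/
theorem horospherical_support_of_geodesic_ball (n : ℕ) (x : EuclideanSpace ℝ (Fin (n + 1)))
    (xt r : ℝ) (hX : ⟪x, x⟫ - xt ^ 2 = -1) (hXf : 0 < xt) (hr : 0 ≤ r)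
    (z : EuclideanSpace ℝ (Fin (n + 1))) (hz : ‖z‖ = 1) :
    IsLUB
      {a : ℝ | ∃ (t : ℝ) (v : EuclideanSpace ℝ (Fin (n + 1))) (vt : ℝ),
        0 ≤ t ∧ t ≤ r ∧ ⟪x, v⟫ - xt * vt = 0 ∧ ⟪v, v⟫ - vt ^ 2 = 1 ∧
        a = (Real.cosh t * xt + Real.sinh t * vt) -
              ⟪Real.cosh t • x + Real.sinh t • v, z⟫}
      (Real.exp r * (xt - ⟪x, z⟫)) := by
  have hzz : ⟪z, z⟫ = 1 := by
    rw [real_inner_self_eq_norm_sq, hz]; norm_num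
  have hcs : ⟪x, z⟫ * ⟪x, z⟫ ≤ ⟪x, x⟫ * ⟪z, z⟫ := real_inner_mul_inner_self_le x z
  set α : ℝ := xt - ⟪x, z⟫ with hα
  have hcs1 : ⟪x, z⟫ ^ 2 ≤ xt ^ 2 - 1 := by nlinarith
  have hαpos : 0 < α := by nlinarith
  have hαne : α ≠ 0 := ne_of_gt hαpos
  have hinv : α⁻¹ * α = 1 := inv_mul_cancel₀ hαne
  -- key lemma: tangent vectors have nonnegative Minkowski norm
  have hq : ∀ (u : EuclideanSpace ℝ (Fin (n + 1))) (ut : ℝ),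
      ⟪x, u⟫ - xt * ut = 0 → ut ^ 2 ≤ ⟪u, u⟫ := by
    intro u ut h
    have hcs' : ⟪x, u⟫ * ⟪x, u⟫ ≤ ⟪x, x⟫ * ⟪u, u⟫ := real_inner_mul_inner_self_le x u
    have h0 : (0 : ℝ) ≤ ⟪u, u⟫ := real_inner_self_nonneg
    have hxu : ⟪x, u⟫ = xt * ut := by linarith
    have hxx : ⟪x, x⟫ = xt ^ 2 - 1 := by linarith
    rw [hxu, hxx] at hcs'
    nlinarith [mul_pos hXf hXf]
  apply IsGreatest.isLUB
  constructor
  · -- the value is attained at t = r, v = x - α⁻¹ • z, vt = xt - α⁻¹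
    refine ⟨r, x - α⁻¹ • z, xt - α⁻¹, hr, le_refl r, ?_, ?_, ?_⟩
    · rw [inner_sub_right, real_inner_smul_right]
      linear_combination hX + hinv - α⁻¹ * hα
    · rw [inner_sub_left, inner_sub_right, inner_sub_right, real_inner_smul_left,
        real_inner_smul_left, real_inner_smul_right, real_inner_smul_right,
        real_inner_comm z x, hzz]
      linear_combination hX + 2 * hinv - 2 * α⁻¹ * hα + 2 * α⁻¹ * real_inner_comm z x
    · rw [inner_add_left, real_inner_smul_left, real_inner_smul_left, inner_sub_left,
        real_inner_smul_left, hzz]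
      have hch : Real.cosh r + Real.sinh r = Real.exp r := Real.cosh_add_sinh r
      linear_combination (-α) * hch + (Real.cosh r + Real.sinh r) * hα
  · -- upper bound
    rintro a ⟨t, v, vt, ht0, htr, htan, hunit, rfl⟩
    rw [inner_add_left, real_inner_smul_left, real_inner_smul_left]
    have hu := hq (α • v - (α • x - z)) (α * vt - (α * xt - 1)) ?_
    · have hexp : Real.cosh t + Real.sinh t = Real.exp t := Real.cosh_add_sinh t
      have hsinh : 0 ≤ Real.sinh t := Real.sinh_nonneg_iff.mpr ht0
      have hexple : Real.exp t ≤ Real.exp r := Real.exp_le_exp.mpr htr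
      have hexpand : ⟪α • v - (α • x - z), α • v - (α • x - z)⟫ =
          α ^ 2 * ⟪v, v⟫ - 2 * α * (α * ⟪x, v⟫ - ⟪v, z⟫) +
            (α ^ 2 * ⟪x, x⟫ - 2 * α * ⟪x, z⟫ + ⟪z, z⟫) := by
        simp only [inner_sub_left, inner_sub_right, real_inner_smul_left, real_inner_smul_right]
        rw [real_inner_comm v x, real_inner_comm z v, real_inner_comm z x]
        ring
      rw [hexpand, hzz] at hu
      have hE : α ^ 2 * ⟪v, v⟫ - 2 * α * (α * ⟪x, v⟫ - ⟪v, z⟫) +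
            (α ^ 2 * ⟪x, x⟫ - 2 * α * ⟪x, z⟫ + 1) - (α * vt - (α * xt - 1)) ^ 2 =
          2 * α * (⟪v, z⟫ - vt) + 2 * α * α := by
        linear_combination α ^ 2 * hunit - 2 * α ^ 2 * htan + α ^ 2 * hX - 2 * α * hα
      have hpos : 0 ≤ 2 * α * (⟪v, z⟫ - vt) + 2 * α * α := by linarith
      have hβ : vt - ⟪v, z⟫ ≤ α := by nlinarith
      have h1 : Real.sinh t * (vt - ⟪v, z⟫) ≤ Real.sinh t * α :=
        mul_le_mul_of_nonneg_left hβ hsinh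
      have h2 : Real.exp t * α ≤ Real.exp r * α :=
        mul_le_mul_of_nonneg_right hexple hαpos.le
      calc Real.cosh t * xt + Real.sinh t * vt -
              (Real.cosh t * ⟪x, z⟫ + Real.sinh t * ⟪v, z⟫)
          = Real.cosh t * α + Real.sinh t * (vt - ⟪v, z⟫) := by rw [hα]; ring
        _ ≤ Real.cosh t * α + Real.sinh t * α := by linarith
        _ = Real.exp t * α := by rw [← hexp]; ring
        _ ≤ Real.exp r * α := h2
    · rw [inner_sub_right, inner_sub_right, real_inner_smul_right, real_inner_smul_right]
      linear_combination α * htan - α * hX + hα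
end

section
/- Let Y be a point in H^{n+1} and let K ⊂ H^{n+1} be a bounded measurable domain that is symmetric with respect to a point X ∈ H^{n+1} (i.e., invariant under the geodesic point reflection through X). Then ∫_K cosh(d(P, Y)) dv(P) = cosh(d(X, Y)) · ∫_K cosh(d(P, X)) dv(P), where d is the hyperbolic distance and dv the hyperbolic volume element. -/
open MeasureTheory RealInnerProductSpace

/-- Let `X = (x, xt)` and `Y = (y, yt)` be points of the hyperboloid
`H^{n+1} ⊂ ℝ^{n+1,1}`, and let `μ` be the (finite) hyperbolic volume measure of a bounded
measurable domain `K ⊂ H^{n+1}` that is symmetric with respect to `X`, i.e. `μ` is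
invariant under the geodesic point reflection `P ↦ −P − 2⟨P,X⟩X` through `X`
(`⟨·,·⟩` the Lorentzian product). Then, with `cosh d(P,Q) = −⟨P,Q⟩`,
`∫_K cosh d(P,Y) dμ(P) = cosh d(X,Y) · ∫_K cosh d(P,X) dμ(P)`. -/
theorem weighted_volume_of_symmetric_domain (n : ℕ)
    (μ : Measure (EuclideanSpace ℝ (Fin (n + 1)) × ℝ)) [IsFiniteMeasure μ]
    (x y : EuclideanSpace ℝ (Fin (n + 1))) (xt yt : ℝ)
    (hX : ⟪x, x⟫ - xt ^ 2 = -1) (hXf : 0 < xt)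
    (hY : ⟪y, y⟫ - yt ^ 2 = -1) (hYf : 0 < yt)
    (hsupp : ∀ᵐ P ∂μ, ⟪P.1, P.1⟫ - P.2 ^ 2 = -1 ∧ 0 < P.2)
    (hbd : ∃ C : ℝ, ∀ᵐ P ∂μ, ‖P.1‖ ≤ C ∧ |P.2| ≤ C)
    (hsym : μ.map (fun P : EuclideanSpace ℝ (Fin (n + 1)) × ℝ =>
        (-P.1 - (2 * (⟪P.1, x⟫ - P.2 * xt)) • x,
          -P.2 - 2 * (⟪P.1, x⟫ - P.2 * xt) * xt)) = μ) :
    ∫ P, (P.2 * yt - ⟪P.1, y⟫) ∂μ =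
      (xt * yt - ⟪x, y⟫) * ∫ P, (P.2 * xt - ⟪P.1, x⟫) ∂μ := by
  set σ : EuclideanSpace ℝ (Fin (n + 1)) × ℝ → EuclideanSpace ℝ (Fin (n + 1)) × ℝ :=
    fun P => (-P.1 - (2 * (⟪P.1, x⟫ - P.2 * xt)) • x,
      -P.2 - 2 * (⟪P.1, x⟫ - P.2 * xt) * xt) with hσ
  set c : ℝ := xt * yt - ⟪x, y⟫ with hc
  -- auxiliary integrability lemma for linear functionals
  have key : ∀ z : EuclideanSpace ℝ (Fin (n + 1)), ∀ zt : ℝ,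
      Integrable (fun P : EuclideanSpace ℝ (Fin (n + 1)) × ℝ => P.2 * zt - ⟪P.1, z⟫) μ := by
    intro z zt
    obtain ⟨C, hC⟩ := hbd
    have hcont : Continuous (fun P : EuclideanSpace ℝ (Fin (n + 1)) × ℝ =>
        P.2 * zt - ⟪P.1, z⟫) := by
      exact (continuous_snd.mul continuous_const).sub
        (continuous_fst.inner continuous_const)
    refine Integrable.mono' (integrable_const (|zt| * C + ‖z‖ * C))
      hcont.aestronglyMeasurable ?_
    filter_upwards [hC] with P hP
    have h1 := hP.1; have h2 := hP.2
    have hz : |⟪P.1, z⟫| ≤ ‖P.1‖ * ‖z‖ := abs_real_inner_le_norm _ _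
    calc ‖P.2 * zt - ⟪P.1, z⟫‖ ≤ |P.2 * zt| + |⟪P.1, z⟫| := abs_sub _ _
      _ ≤ |zt| * C + ‖z‖ * C := by
          rw [abs_mul]
          have h0 : (0:ℝ) ≤ C := le_trans (norm_nonneg _) h1
          nlinarith [abs_nonneg P.2, norm_nonneg P.1, norm_nonneg z, abs_nonneg zt]
  have hfy := key y yt
  have hfx := key x xt
  have hσc : Continuous σ := by
    have h1 : Continuous (fun P : EuclideanSpace ℝ (Fin (n + 1)) × ℝ =>
        ⟪P.1, x⟫ - P.2 * xt) :=
      (continuous_fst.inner continuous_const).sub (continuous_snd.mul continuous_const)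
    exact ((continuous_fst.neg.sub ((continuous_const.mul h1).smul continuous_const))).prodMk
      (continuous_snd.neg.sub ((continuous_const.mul h1).mul continuous_const))
  -- key pointwise identity: f ∘ σ = -f + 2c•g
  have hpt : ∀ P : EuclideanSpace ℝ (Fin (n + 1)) × ℝ,
      ((σ P).2 * yt - ⟪(σ P).1, y⟫) =
        -(P.2 * yt - ⟪P.1, y⟫) + 2 * c * (P.2 * xt - ⟪P.1, x⟫) := by
    intro P
    simp only [hσ, hc, inner_sub_left, inner_neg_left, real_inner_smul_left]
    ring
  have step1 : ∫ P, (P.2 * yt - ⟪P.1, y⟫) ∂μ =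
      ∫ P, ((σ P).2 * yt - ⟪(σ P).1, y⟫) ∂μ := by
    nth_rewrite 1 [← hsym]
    rw [integral_map hσc.aemeasurable (by rw [hsym]; exact hfy.aestronglyMeasurable)]
  have step2 : ∫ P, ((σ P).2 * yt - ⟪(σ P).1, y⟫) ∂μ =
      -(∫ P, (P.2 * yt - ⟪P.1, y⟫) ∂μ) + 2 * c * ∫ P, (P.2 * xt - ⟪P.1, x⟫) ∂μ := by
    have : ∫ P, ((σ P).2 * yt - ⟪(σ P).1, y⟫) ∂μ =
        ∫ P, (-(P.2 * yt - ⟪P.1, y⟫) + 2 * c * (P.2 * xt - ⟪P.1, x⟫)) ∂μ := by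
      exact integral_congr_ae (Filter.Eventually.of_forall hpt)
    have h1 : Integrable (fun P : EuclideanSpace ℝ (Fin (n + 1)) × ℝ =>
        -(P.2 * yt - ⟪P.1, y⟫)) μ := hfy.neg
    have h2 : Integrable (fun P : EuclideanSpace ℝ (Fin (n + 1)) × ℝ =>
        2 * c * (P.2 * xt - ⟪P.1, x⟫)) μ := hfx.const_mul _
    rw [this, integral_add h1 h2, integral_neg, integral_const_mul]
  have := step1.trans step2
  linarith
end

section
/- Let p ≥ 1 and define χ(t) = (t² + 1)^{1/2} · ((t² + 1)^{1/2} − t)^p for t ∈ R. Then χ is strictly decreasing and strictly convex on R; moreover the function t ↦ χ(t)/t is strictly decreasing on (0, +∞). -/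
open Real

private lemma s_pos (t : ℝ) : 0 < Real.sqrt (t ^ 2 + 1) :=
  Real.sqrt_pos.2 (by positivity)

private lemma s_sq (t : ℝ) : Real.sqrt (t ^ 2 + 1) ^ 2 = t ^ 2 + 1 :=
  Real.sq_sqrt (by positivity)

private lemma t_lt_s (t : ℝ) : t < Real.sqrt (t ^ 2 + 1) := by
  nlinarith [s_pos t, s_sq t, abs_nonneg t, sq_abs t, le_abs_self t]

private lemma hasDerivAt_s (t : ℝ) :
    HasDerivAt (fun t : ℝ => Real.sqrt (t ^ 2 + 1)) (t / Real.sqrt (t ^ 2 + 1)) t := by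
  have h1 : HasDerivAt (fun t : ℝ => t ^ 2 + 1) (2 * t) t := by
    simpa using ((hasDerivAt_pow 2 t).add_const 1)
  have h2 := (Real.hasDerivAt_sqrt (x := t ^ 2 + 1) (by positivity)).comp t h1
  refine HasDerivAt.congr_deriv h2 (Eq.symm ?_)
  field_simp

private lemma hasDerivAt_chi (p : ℝ) (hp : 1 ≤ p) (t : ℝ) :
    HasDerivAt (fun t : ℝ => Real.sqrt (t ^ 2 + 1) * (Real.sqrt (t ^ 2 + 1) - t) ^ p)
      ((Real.sqrt (t ^ 2 + 1) - t) ^ p * (t - p * Real.sqrt (t ^ 2 + 1)) /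
        Real.sqrt (t ^ 2 + 1)) t := by
  set s := Real.sqrt (t ^ 2 + 1) with hs
  have hspos := s_pos t
  have hts := t_lt_s t
  have hst : (0:ℝ) < s - t := sub_pos.2 hts
  have hg : HasDerivAt (fun t : ℝ => Real.sqrt (t ^ 2 + 1) - t) (t / s - 1) t :=
    (hasDerivAt_s t).sub (hasDerivAt_id t)
  have hh : HasDerivAt (fun t : ℝ => (Real.sqrt (t ^ 2 + 1) - t) ^ p)
      (p * (s - t) ^ (p - 1) * (t / s - 1)) t := by
    have := hg.rpow_const (p := p) (Or.inl hst.ne')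
    convert this using 1
    ring
  have := (hasDerivAt_s t).mul hh
  refine HasDerivAt.congr_deriv this (Eq.symm ?_)
  rw [← hs]
  rw [Real.rpow_sub_one hst.ne']
  have hs0 : s ≠ 0 := hspos.ne'
  field_simp
  ring

private lemma hasDerivAt_D (p : ℝ) (hp : 1 ≤ p) (t : ℝ) :
    HasDerivAt (fun t : ℝ => (Real.sqrt (t ^ 2 + 1) - t) ^ p *
        (t - p * Real.sqrt (t ^ 2 + 1)) / Real.sqrt (t ^ 2 + 1))
      ((Real.sqrt (t ^ 2 + 1) - t) ^ p *
        (p ^ 2 * Real.sqrt (t ^ 2 + 1) ^ 2 - p * t * Real.sqrt (t ^ 2 + 1) + 1) /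
        Real.sqrt (t ^ 2 + 1) ^ 3) t := by
  have hspos := s_pos t
  have hts := t_lt_s t
  have hst : (0:ℝ) < Real.sqrt (t ^ 2 + 1) - t := sub_pos.2 hts
  have hsq := s_sq t
  have hg : HasDerivAt (fun t : ℝ => Real.sqrt (t ^ 2 + 1) - t)
      (t / Real.sqrt (t ^ 2 + 1) - 1) t :=
    (hasDerivAt_s t).sub (hasDerivAt_id t)
  have hh : HasDerivAt (fun t : ℝ => (Real.sqrt (t ^ 2 + 1) - t) ^ p)
      ((t / Real.sqrt (t ^ 2 + 1) - 1) * p * (Real.sqrt (t ^ 2 + 1) - t) ^ (p - 1)) t :=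
    hg.rpow_const (Or.inl hst.ne')
  have hu : HasDerivAt (fun t : ℝ => t - p * Real.sqrt (t ^ 2 + 1))
      (1 - p * (t / Real.sqrt (t ^ 2 + 1))) t :=
    (hasDerivAt_id t).sub ((hasDerivAt_s t).const_mul p)
  have hnum := hh.mul hu
  have := hnum.div (hasDerivAt_s t) hspos.ne'
  refine HasDerivAt.congr_deriv this (Eq.symm ?_)
  simp only [Pi.mul_apply]
  rw [Real.rpow_sub_one hst.ne']
  obtain ⟨S, hS⟩ : ∃ S, Real.sqrt (t ^ 2 + 1) = S := ⟨_, rfl⟩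
  rw [hS] at hspos hst hsq ⊢
  obtain ⟨A, hA, hApos⟩ : ∃ A, (S - t) ^ p = A ∧ 0 < A :=
    ⟨_, rfl, Real.rpow_pos_of_pos hst p⟩
  rw [hA]
  have h1 : S ≠ 0 := hspos.ne'
  have h2 : S - t ≠ 0 := hst.ne'
  field_simp
  linear_combination (t - S) * hsq

/-- For `p ≥ 1`, the function
`χ(t) = sqrt(t²+1) · (sqrt(t²+1) − t)^p` is strictly decreasing and strictly convex on `ℝ`,
and `t ↦ χ(t)/t` is strictly decreasing on `(0, ∞)`. -/
theorem chi_strictAnti_strictConvex (p : ℝ) (hp : 1 ≤ p) :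
    StrictAnti (fun t : ℝ => Real.sqrt (t ^ 2 + 1) * (Real.sqrt (t ^ 2 + 1) - t) ^ p) ∧
      StrictConvexOn ℝ Set.univ
        (fun t : ℝ => Real.sqrt (t ^ 2 + 1) * (Real.sqrt (t ^ 2 + 1) - t) ^ p) ∧
      StrictAntiOn
        (fun t : ℝ => Real.sqrt (t ^ 2 + 1) * (Real.sqrt (t ^ 2 + 1) - t) ^ p / t)
        (Set.Ioi 0) := by
  set χ := fun t : ℝ => Real.sqrt (t ^ 2 + 1) * (Real.sqrt (t ^ 2 + 1) - t) ^ p with hχ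
  have hpos : ∀ t : ℝ, 0 < χ t := fun t =>
    mul_pos (s_pos t) (Real.rpow_pos_of_pos (sub_pos.2 (t_lt_s t)) p)
  have hp0 : (0:ℝ) < p := lt_of_lt_of_le one_pos hp
  have hDneg : ∀ t : ℝ, (Real.sqrt (t ^ 2 + 1) - t) ^ p *
      (t - p * Real.sqrt (t ^ 2 + 1)) / Real.sqrt (t ^ 2 + 1) < 0 := by
    intro t
    have h1 : t < p * Real.sqrt (t ^ 2 + 1) :=
      lt_of_lt_of_le (t_lt_s t) (le_mul_of_one_le_left (s_pos t).le hp)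
    exact div_neg_of_neg_of_pos
      (mul_neg_of_pos_of_neg (Real.rpow_pos_of_pos (sub_pos.2 (t_lt_s t)) p)
        (sub_neg.2 h1)) (s_pos t)
  have hanti : StrictAnti χ := by
    apply strictAnti_of_deriv_neg
    intro t
    rw [(hasDerivAt_chi p hp t).deriv]
    exact hDneg t
  refine ⟨hanti, ?_, ?_⟩
  · have hderiv : deriv χ = fun t : ℝ => (Real.sqrt (t ^ 2 + 1) - t) ^ p *
        (t - p * Real.sqrt (t ^ 2 + 1)) / Real.sqrt (t ^ 2 + 1) :=
      funext fun t => (hasDerivAt_chi p hp t).deriv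
    have hmono : StrictMono (deriv χ) := by
      rw [hderiv]
      apply strictMono_of_deriv_pos
      intro t
      rw [(hasDerivAt_D p hp t).deriv]
      have hspos := s_pos t
      have hts := t_lt_s t
      have h1 : t < p * Real.sqrt (t ^ 2 + 1) :=
        lt_of_lt_of_le hts (le_mul_of_one_le_left hspos.le hp)
      have h2 : 0 < p * Real.sqrt (t ^ 2 + 1) := mul_pos hp0 hspos
      have h3 : 0 < p ^ 2 * Real.sqrt (t ^ 2 + 1) ^ 2 - p * t * Real.sqrt (t ^ 2 + 1) + 1 := by
        nlinarith [mul_pos h2 (sub_pos.2 h1)]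
      exact div_pos (mul_pos (Real.rpow_pos_of_pos (sub_pos.2 hts) p) h3)
        (pow_pos hspos 3)
    have hcont : Continuous χ := by
      apply Continuous.mul
      · exact (continuous_pow 2 |>.add continuous_const).sqrt
      · apply Continuous.rpow_const
        · exact ((continuous_pow 2 |>.add continuous_const).sqrt).sub continuous_id
        · exact fun t => Or.inl (sub_pos.2 (t_lt_s t)).ne'
    exact hmono.strictConvexOn_univ_of_deriv hcont
  · intro x hx y hy hxy
    simp only [Set.mem_Ioi] at hx hy
    have h1 : χ y < χ x := hanti hxy
    calc χ y / y < χ x / y := by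
          exact div_lt_div_of_pos_right h1 hy
      _ < χ x / x := div_lt_div_of_pos_left (hpos x) hx hxy
end

section
/- Let n ≥ 1 and 0 ≤ k ≤ n be integers, φ a positive C² function on S^n, and t ∈ R. With A[φ] := D²φ − (1/2)(|Dφ|²/φ) σ + (1/2)(φ − 1/φ) σ, the rescaled function φ_t := e^t φ satisfies the expansion σ_{n−k}(A[φ_t]) = Σ_{l=0}^{n−k} C(n−l, n−k−l) φ^{k+l−n} σ_l(A[φ]) e^{l t} sinh^{n−k−l}(t), where σ_m is the m-th elementary symmetric function of the eigenvalues (with respect to σ) and C(·,·) are binomial coefficients. -/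
open RealInnerProductSpace

/-- The (un-normalized) `m`-th elementary symmetric function of `a = (a_1, …, a_n)`. -/
noncomputable def esymmVec (n m : ℕ) (a : Fin n → ℝ) : ℝ :=
  ∑ s ∈ Finset.powersetCard m (Finset.univ : Finset (Fin n)), ∏ i ∈ s, a i

/-- The tensor `A[φ](u,v) = D²φ(u,v) − ½ (|Dφ|²/φ) ⟨u,v⟩ + ½ (φ − 1/φ) ⟨u,v⟩` at a point
`z ∈ S^n`, where the spherical covariant Hessian and gradient of `φ` are computed as the
ambient Hessian and gradient of its `0`-homogeneous extension `y ↦ φ(y/|y|)`, evaluated on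
tangent vectors `u, v ⊥ z`. -/
noncomputable def Aform (n : ℕ) (φ : EuclideanSpace ℝ (Fin (n + 1)) → ℝ)
    (z u v : EuclideanSpace ℝ (Fin (n + 1))) : ℝ :=
  fderiv ℝ (fderiv ℝ (fun y => φ (‖y‖⁻¹ • y))) z u v -
    (1 / 2) * (‖gradient (fun y => φ (‖y‖⁻¹ • y)) z‖ ^ 2 / φ z) * ⟪u, v⟫ +
    (1 / 2) * (φ z - (φ z)⁻¹) * ⟪u, v⟫


open Finset in
lemma card_superset_filter (n m : ℕ) (T : Finset (Fin n)) (hTm : T.card ≤ m) :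
    ((powersetCard m (univ : Finset (Fin n))).filter (fun S => T ⊆ S)).card
      = (n - T.card).choose (m - T.card) := by
  have hc : (univ \ T : Finset (Fin n)).card = n - T.card := by
    rw [card_sdiff_of_subset (subset_univ T), card_univ, Fintype.card_fin]
  rw [← hc, ← Finset.card_powersetCard]
  apply Finset.card_bij' (fun S _ => S \ T) (fun U _ => U ∪ T)
  · intro S hS
    simp only [mem_filter, mem_powersetCard_univ] at hS
    rw [mem_powersetCard]
    exact ⟨sdiff_subset_sdiff (subset_univ S) (Finset.Subset.refl T),
      by rw [card_sdiff_of_subset hS.2, hS.1]⟩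
  · intro U hU
    simp only [mem_powersetCard] at hU
    simp only [mem_filter, mem_powersetCard_univ]
    constructor
    · rw [card_union_of_disjoint]
      · omega
      · exact disjoint_of_subset_left hU.1 sdiff_disjoint
    · exact subset_union_right
  · intro S hS
    simp only [mem_filter, mem_powersetCard_univ] at hS
    exact sdiff_union_of_subset hS.2
  · intro U hU
    simp only [mem_powersetCard] at hU
    exact union_sdiff_cancel_right (disjoint_of_subset_left hU.1 sdiff_disjoint)

open Finset in
lemma card_superset_filter_zero (n m : ℕ) (T : Finset (Fin n)) (hTm : m < T.card) :
    ((powersetCard m (univ : Finset (Fin n))).filter (fun S => T ⊆ S)) = ∅ := by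
  rw [filter_eq_empty_iff]
  intro S hS hsub
  rw [mem_powersetCard_univ] at hS
  have := card_le_card hsub
  omega

open Finset in
lemma esymm_add_const (n m : ℕ) (hm : m ≤ n) (x : Fin n → ℝ) (c : ℝ) :
    esymmVec n m (fun i => x i + c)
      = ∑ l ∈ Finset.range (m + 1),
          ((n - l).choose (m - l) : ℝ) * esymmVec n l x * c ^ (m - l) := by
  unfold esymmVec
  have step1 : ∀ S ∈ powersetCard m (univ : Finset (Fin n)),
      ∏ i ∈ S, (x i + c) = ∑ T ∈ S.powerset, (∏ i ∈ T, x i) * c ^ (m - T.card) := by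
    intro S hS
    rw [mem_powersetCard_univ] at hS
    rw [Finset.prod_add]
    refine sum_congr rfl fun T hT => ?_
    rw [mem_powerset] at hT
    rw [prod_const, card_sdiff_of_subset hT, hS]
  rw [Finset.sum_congr rfl step1]
  have step2 : ∀ S ∈ powersetCard m (univ : Finset (Fin n)),
      (∑ T ∈ S.powerset, (∏ i ∈ T, x i) * c ^ (m - T.card))
        = ∑ T ∈ (univ : Finset (Fin n)).powerset,
            if T ⊆ S then (∏ i ∈ T, x i) * c ^ (m - T.card) else 0 := by
    intro S _
    rw [← Finset.sum_filter]
    congr 1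
    ext T
    simp [Finset.mem_powerset]
  rw [Finset.sum_congr rfl step2, Finset.sum_comm]
  have step3 : ∀ T ∈ (univ : Finset (Fin n)).powerset,
      (∑ S ∈ powersetCard m (univ : Finset (Fin n)),
          if T ⊆ S then (∏ i ∈ T, x i) * c ^ (m - T.card) else 0)
        = if T.card ≤ m then
            ((n - T.card).choose (m - T.card) : ℝ) * ((∏ i ∈ T, x i) * c ^ (m - T.card))
          else 0 := by
    intro T _
    rw [← Finset.sum_filter, Finset.sum_const, nsmul_eq_mul]
    by_cases h : T.card ≤ m
    · rw [if_pos h, card_superset_filter n m T h]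
    · rw [if_neg h, card_superset_filter_zero n m T (not_le.mp h)]
      simp
  rw [Finset.sum_congr rfl step3]
  rw [powerset_card_biUnion, Finset.sum_biUnion (s := range ((univ : Finset (Fin n)).card + 1))
    (t := fun i => powersetCard i univ) (fun i _ j _ hij => pairwise_disjoint_powersetCard _ hij), card_univ, Fintype.card_fin]
  rw [← Finset.sum_subset (Finset.range_subset_range.mpr (by omega : m + 1 ≤ n + 1))]
  · refine Finset.sum_congr rfl fun l hl => ?_
    rw [Finset.mem_range] at hl
    rw [Finset.sum_congr rfl
      (fun T hT => by rw [(mem_powersetCard_univ.mp hT : T.card = l)])]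
    rw [Finset.sum_congr rfl (fun T _ => if_pos (by omega : l ≤ m)),
      ← Finset.mul_sum, ← Finset.sum_mul]
    ring
  · intro l hl1 hl
    rw [Finset.mem_range, not_lt] at hl
    apply Finset.sum_eq_zero
    intro T hT
    rw [mem_powersetCard_univ] at hT
    rw [if_neg (by omega)]


lemma Aform_rescale (n : ℕ) (φ : EuclideanSpace ℝ (Fin (n + 1)) → ℝ)
    (hφ : ContDiff ℝ 2 φ) (t : ℝ) (z u v : EuclideanSpace ℝ (Fin (n + 1)))
    (hz : ‖z‖ = 1) (hφz : 0 < φ z) :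
    Aform n (fun y => Real.exp t * φ y) z u v
      = Real.exp t * Aform n φ z u v + Real.sinh t * (φ z)⁻¹ * ⟪u, v⟫ := by
  have hz0 : z ≠ 0 := fun h => by rw [h, norm_zero] at hz; norm_num at hz
  have hfC : ∀ y : EuclideanSpace ℝ (Fin (n + 1)), y ≠ 0 →
      ContDiffAt ℝ 2 (fun y => φ (‖y‖⁻¹ • y)) y := by
    intro y hy
    have h1 : ContDiffAt ℝ 2 (fun y : EuclideanSpace ℝ (Fin (n + 1)) => ‖y‖) y :=
      contDiffAt_id.norm ℝ hy
    exact (hφ.contDiffAt).comp y ((h1.inv (norm_ne_zero_iff.mpr hy)).smul contDiffAt_id)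
  have hdf : ∀ y : EuclideanSpace ℝ (Fin (n + 1)), y ≠ 0 →
      DifferentiableAt ℝ (fun y => φ (‖y‖⁻¹ • y)) y :=
    fun y hy => (hfC y hy).differentiableAt two_ne_zero
  have hev : ∀ᶠ y in nhds z, fderiv ℝ (fun w => Real.exp t * φ (‖w‖⁻¹ • w)) y
      = Real.exp t • fderiv ℝ (fun y => φ (‖y‖⁻¹ • y)) y := by
    filter_upwards [IsOpen.mem_nhds isOpen_compl_singleton hz0] with y hy
    exact fderiv_const_mul (hdf y hy) _
  have hdf2 : DifferentiableAt ℝ (fderiv ℝ (fun y => φ (‖y‖⁻¹ • y))) z :=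
    ((hfC z hz0).fderiv_right (m := 1) (by norm_num)).differentiableAt one_ne_zero
  have hhess : fderiv ℝ (fderiv ℝ (fun w => Real.exp t * φ (‖w‖⁻¹ • w))) z
      = Real.exp t • fderiv ℝ (fderiv ℝ (fun y => φ (‖y‖⁻¹ • y))) z := by
    rw [Filter.EventuallyEq.fderiv_eq hev]
    exact fderiv_const_smul hdf2 (Real.exp t)
  have hgrad : gradient (fun w => Real.exp t * φ (‖w‖⁻¹ • w)) z
      = Real.exp t • gradient (fun y => φ (‖y‖⁻¹ • y)) z := by
    unfold gradient
    rw [fderiv_const_mul (hdf z hz0), map_smul]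
  unfold Aform
  simp only []
  rw [hhess, hgrad, norm_smul, mul_pow]
  simp only [ContinuousLinearMap.smul_apply, smul_eq_mul, Real.norm_eq_abs]
  rw [abs_of_pos (Real.exp_pos t)]
  have hφne : φ z ≠ 0 := ne_of_gt hφz
  have hexpne : Real.exp t ≠ 0 := (Real.exp_pos t).ne'
  rw [Real.sinh_eq, Real.exp_neg]
  field_simp
  ring

lemma esymm_smul (n l : ℕ) (c : ℝ) (a : Fin n → ℝ) :
    esymmVec n l (fun i => c * a i) = c ^ l * esymmVec n l a := by
  unfold esymmVec
  rw [Finset.mul_sum]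
  refine Finset.sum_congr rfl fun T hT => ?_
  rw [Finset.prod_mul_distrib, Finset.prod_const,
    (Finset.mem_powersetCard_univ.mp hT : T.card = l)]

/-- Let `φ` be a positive `C²` function on `S^n`, `0 ≤ k ≤ n`, `t ∈ ℝ`,
and let `z ∈ S^n` with an orthonormal tangent frame `e_1, …, e_n` in which `A[φ]` is
diagonal with eigenvalues `a_1, …, a_n`. Then the rescaled function `φ_t = e^t φ`
satisfies
`σ_{n−k}(A[φ_t]) = Σ_{l=0}^{n−k} C(n−l, n−k−l) φ^{k+l−n} σ_l(A[φ]) e^{lt} sinh^{n−k−l}(t)`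
(where `σ_{n-k}(A[φ_t])` is computed as the elementary symmetric function of the diagonal
entries of `A[φ_t]` in the frame `e`). -/
theorem sigma_of_rescaled_A_expansion (n k : ℕ) (hn : 1 ≤ n) (hk : k ≤ n)
    (φ : EuclideanSpace ℝ (Fin (n + 1)) → ℝ) (hφ : ContDiff ℝ 2 φ)
    (hφpos : ∀ z, ‖z‖ = 1 → 0 < φ z) (t : ℝ)
    (z : EuclideanSpace ℝ (Fin (n + 1))) (hz : ‖z‖ = 1)
    (e : Fin n → EuclideanSpace ℝ (Fin (n + 1)))
    (he : ∀ i, ⟪e i, z⟫ = 0)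
    (hon : ∀ i j, ⟪e i, e j⟫ = if i = j then 1 else 0)
    (a : Fin n → ℝ)
    (hdiag : ∀ i j, Aform n φ z (e i) (e j) = if i = j then a i else 0) :
    esymmVec n (n - k) (fun i => Aform n (fun y => Real.exp t * φ y) z (e i) (e i)) =
      ∑ l ∈ Finset.range (n - k + 1),
        ((n - l).choose (n - k - l) : ℝ) * φ z ^ ((k : ℤ) + (l : ℤ) - (n : ℤ)) *
          esymmVec n l a * Real.exp ((l : ℝ) * t) * Real.sinh t ^ (n - k - l) := by
  have hm : n - k ≤ n := Nat.sub_le n k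
  have hφz : 0 < φ z := hφpos z hz
  have hb : (fun i => Aform n (fun y => Real.exp t * φ y) z (e i) (e i))
      = fun i => (Real.exp t * a i) + Real.sinh t * (φ z)⁻¹ := by
    funext i
    rw [Aform_rescale n φ hφ t z (e i) (e i) hz hφz, hdiag i i, if_pos rfl,
      hon i i, if_pos rfl, mul_one]
  rw [hb, esymm_add_const n (n - k) hm (fun i => Real.exp t * a i)
    (Real.sinh t * (φ z)⁻¹)]
  refine Finset.sum_congr rfl fun l hl => ?_
  rw [Finset.mem_range] at hl
  rw [esymm_smul n l (Real.exp t) a, ← Real.exp_nat_mul]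
  have hz1 : ((k : ℤ) + (l : ℤ) - (n : ℤ)) = -((n - k - l : ℕ) : ℤ) := by omega
  rw [hz1, zpow_neg, zpow_natCast, ← inv_pow, mul_pow]
  ring
end
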